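/- Let X be a representation of the linearly oriented quiver A_n which admits a surjective morphism onto E^{kl}, and suppose X is expressed as a direct sum of interval representations. Then among the summands there is some E^{kj} with j ≥ l (i.e., a summand whose support begins at vertex k and extends at least to vertex l). -/

import Mathlib

open Classical

/-- A representation of a quiver (given by vertex type `ι`, arrow type `E`,
and source/target maps `s t : E → ι`) over a field `K`: a finite-dimensional
`K`-vector space at each vertex and a linear map along each arrow. -/
structure QRep (K : Type) [Field K] {ι : Type} {E : Type} (s t : E → ι) : Type 1 where
  V : ι → Type
  [addV : ∀ i, AddCommGroup (V i)]
  [modV : ∀ i, Module K (V i)]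
  [fdV : ∀ i, FiniteDimensional K (V i)]
  f : ∀ e : E, V (s e) →ₗ[K] V (t e)

attribute [instance] QRep.addV QRep.modV QRep.fdV

namespace QRep

variable {K : Type} [Field K] {ι E : Type} {s t : E → ι}

/-- A morphism of representations: linear maps at each vertex commuting with the arrow maps. -/
structure Hom (X Y : QRep K s t) : Type where
  φ : ∀ i, X.V i →ₗ[K] Y.V i
  comm : ∀ e, (Y.f e).comp (φ (s e)) = (φ (t e)).comp (X.f e)

def Hom.Surjective {X Y : QRep K s t} (f : Hom X Y) : Prop := ∀ i, Function.Surjective (f.φ i)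

def Hom.Injective {X Y : QRep K s t} (f : Hom X Y) : Prop := ∀ i, Function.Injective (f.φ i)

/-- Two representations are isomorphic if there is a morphism bijective at every vertex. -/
def Iso (X Y : QRep K s t) : Prop := ∃ f : Hom X Y, ∀ i, Function.Bijective (f.φ i)

/-- Direct sum of two representations, taken vertexwise. -/
def dsum (X Y : QRep K s t) : QRep K s t where
  V i := X.V i × Y.V i
  f e := (X.f e).prodMap (Y.f e)

instance : Module.Finite K PUnit :=
  Module.Finite.of_surjective (0 : K →ₗ[K] PUnit) (fun x => ⟨0, Subsingleton.elim _ _⟩)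

/-- The zero representation. -/
def zero : QRep K s t where
  V _ := PUnit
  f _ := 0

/-- A representation is zero if all its vector spaces are zero. -/
def IsZero (X : QRep K s t) : Prop := ∀ i, ∀ x : X.V i, x = 0

/-- Indecomposable: nonzero, and not isomorphic to a direct sum of two nonzero representations. -/
def Indec (X : QRep K s t) : Prop :=
  ¬ X.IsZero ∧ ∀ A B : QRep K s t, Iso X (A.dsum B) → A.IsZero ∨ B.IsZero

/-- Direct sum of a finite list of representations. -/
noncomputable def dsumList : List (QRep K s t) → QRep K s t
  | [] => zero
  | X :: L => X.dsum (dsumList L)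

/-- An extension `Y` of `Z` by `X`: an injective morphism `X → Y` and a surjective
morphism `Y → Z` whose vertexwise kernel is the image of `X`. -/
structure Extension (X Y Z : QRep K s t) : Type where
  incl : Hom X Y
  proj : Hom Y Z
  inj : ∀ i, Function.Injective (incl.φ i)
  surj : ∀ i, Function.Surjective (proj.φ i)
  exact : ∀ i, LinearMap.ker (proj.φ i) = LinearMap.range (incl.φ i)

/-- An extension is trivial (split) if there is a morphism `Y → X` restricting to the identity on `X`. -/
def Extension.Trivial {X Y Z : QRep K s t} (E : Extension X Y Z) : Prop :=
  ∃ r : Hom Y X, ∀ i x, r.φ i (E.incl.φ i x) = x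

/-- A subrepresentation of `Y`: a subspace at each vertex, stable under the arrow maps. -/
structure Sub (Y : QRep K s t) : Type where
  p : ∀ i, Submodule K (Y.V i)
  stable : ∀ e, ∀ x ∈ p (s e), Y.f e x ∈ p (t e)

def Sub.toRep {Y : QRep K s t} (S : Sub Y) : QRep K s t where
  V i := S.p i
  f e := (Y.f e).restrict (S.stable e)

/-- The quotient representation `Y/X`. -/
def Sub.quot {Y : QRep K s t} (S : Sub Y) : QRep K s t where
  V i := Y.V i ⧸ S.p i
  f e := Submodule.mapQ (S.p (s e)) (S.p (t e)) (Y.f e) (fun x hx => S.stable e x hx)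

/-- The inclusion morphism of a subrepresentation. -/
def Sub.incl {Y : QRep K s t} (S : Sub Y) : Hom S.toRep Y where
  φ i := (S.p i).subtype
  comm e := by ext x; rfl

/-- The quotient morphism onto the quotient representation. -/
def Sub.mkQ {Y : QRep K s t} (S : Sub Y) : Hom Y S.quot where
  φ i := (S.p i).mkQ
  comm e := by ext x; first | rfl | simp [Sub.quot, Submodule.mapQ_apply] | exact Submodule.mapQ_apply _ _ _

/-- The space of morphisms between two representations, as a subspace of the product of Hom spaces. -/
def HomSpace (X Y : QRep K s t) : Submodule K (∀ i, X.V i →ₗ[K] Y.V i) where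
  carrier := {φ | ∀ e, (Y.f e).comp (φ (s e)) = (φ (t e)).comp (X.f e)}
  add_mem' := by
    intro a b ha hb e
    simp only [Set.mem_setOf_eq] at ha hb
    simp [LinearMap.comp_add, LinearMap.add_comp, ha e, hb e]
  zero_mem' := by intro e; simp
  smul_mem' := by
    intro c a ha e
    simp only [Set.mem_setOf_eq] at ha
    simp [LinearMap.comp_smul, LinearMap.smul_comp, ha e]

end QRep
/-- The source of the `e`-th arrow of the linearly oriented quiver `Aₙ`
(vertices `0,…,n-1`, arrows `e → e+1` for `0 ≤ e < n-1`; 0-based indexing). -/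
def ASrc (n : ℕ) (e : Fin (n - 1)) : Fin n := ⟨e.val, by have := e.isLt; omega⟩

/-- The target of the `e`-th arrow of `Aₙ`. -/
def ATgt (n : ℕ) (e : Fin (n - 1)) : Fin n := ⟨e.val + 1, by have := e.isLt; omega⟩

/-- Representations of the linearly oriented quiver `Aₙ`. -/
abbrev ARep (K : Type) [Field K] (n : ℕ) := QRep K (ASrc n) (ATgt n)

/-- The canonical map from `M` to a submodule `T`: the identity if `T = ⊤`, zero otherwise. -/
noncomputable def toSub {K M : Type} [Field K] [AddCommGroup M] [Module K M]
    (T : Submodule K M) : M →ₗ[K] T :=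
  if h : T = ⊤ then LinearMap.codRestrict T LinearMap.id (fun x => by simp [h]) else 0

/-- The vertex spaces of the interval representation `E^{ij}`: `K` for `i ≤ p ≤ j`, zero otherwise. -/
def ESub (K : Type) [Field K] (n i j : ℕ) (p : Fin n) : Submodule K K :=
  if i ≤ p.val ∧ p.val ≤ j then ⊤ else ⊥

/-- The interval representation `E^{ij}` of `Aₙ` (0-based): one-dimensional spaces at
vertices `i,…,j`, identity maps between consecutive ones, zero elsewhere. -/
noncomputable def Eij (K : Type) [Field K] (n i j : ℕ) : ARep K n where
  V p := ESub K n i j p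
  f e := (toSub (ESub K n i j (ATgt n e))).comp (ESub K n i j (ASrc n e)).subtype

/-- Direct sum of interval representations indexed by a list of pairs. -/
noncomputable def intervalSum (K : Type) [Field K] (n : ℕ) (L : List (ℕ × ℕ)) : ARep K n :=
  QRep.dsumList (L.map fun pr => Eij K n pr.1 pr.2)

/-! A morphism `E^{ij} → E^{kl}` vanishes at vertex `k` unless `i = k` and `l ≤ j`.
If `k ∉ [i, j]` its source is zero there. If `i < k ≤ j`, the arrow `k - 1 → k` of `E^{ij}`
is onto while `E^{kl}` is zero at `k - 1`. If `i = k` and `j < l`, the morphism vanishes at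
`l`, and since the arrows of `E^{kl}` are injective on `[k, l]` it vanishes at every vertex
from `l` down to `k`. A morphism out of a direct sum vanishes wherever it does on every
summand, so a surjection onto `E^{kl}`, which is nonzero at `k`, needs a summand `E^{kj}`
with `l ≤ j`. -/

namespace QRep

variable {K : Type} [Field K] {ι E : Type} {s t : E → ι}

def Hom.comp {X Y Z : QRep K s t} (g : Hom Y Z) (f : Hom X Y) : Hom X Z where
  φ i := (g.φ i).comp (f.φ i)
  comm e := by
    rw [← LinearMap.comp_assoc, g.comm, LinearMap.comp_assoc, f.comm, LinearMap.comp_assoc]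

def inl (X Y : QRep K s t) : Hom X (X.dsum Y) where
  φ i := LinearMap.inl K (X.V i) (Y.V i)
  comm e := LinearMap.ext fun x =>
    show ((X.f e x, Y.f e 0) : X.V (t e) × Y.V (t e)) = (X.f e x, 0) by rw [map_zero]

def inr (X Y : QRep K s t) : Hom Y (X.dsum Y) where
  φ i := LinearMap.inr K (X.V i) (Y.V i)
  comm e := LinearMap.ext fun y =>
    show ((X.f e 0, Y.f e y) : X.V (t e) × Y.V (t e)) = (0, Y.f e y) by rw [map_zero]

theorem Hom.φ_eq_zero_of_subsingleton_left {X Y : QRep K s t} (g : Hom X Y) (v : ι)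
    (hX : Subsingleton (X.V v)) : g.φ v = 0 :=
  Subsingleton.elim _ _

theorem Hom.φ_eq_zero_of_subsingleton_right {X Y : QRep K s t} (g : Hom X Y) (v : ι)
    (hY : Subsingleton (Y.V v)) : g.φ v = 0 :=
  Subsingleton.elim _ _

theorem Hom.φ_target_eq_zero_of_surjective {X Y : QRep K s t} (g : Hom X Y) {e : E}
    (hX : Function.Surjective (X.f e)) (h : g.φ (s e) = 0) : g.φ (t e) = 0 := by
  ext y
  obtain ⟨x, rfl⟩ := hX y
  simpa [h] using (LinearMap.congr_fun (g.comm e) x).symm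

theorem Hom.φ_source_eq_zero_of_injective {X Y : QRep K s t} (g : Hom X Y) {e : E}
    (hY : Function.Injective (Y.f e)) (h : g.φ (t e) = 0) : g.φ (s e) = 0 := by
  ext x
  apply hY
  simpa [h] using LinearMap.congr_fun (g.comm e) x

theorem Hom.φ_dsum_eq_zero {X Y Z : QRep K s t} {v : ι}
    (hX : ∀ g : Hom X Z, g.φ v = 0) (hY : ∀ g : Hom Y Z, g.φ v = 0) (g : Hom (X.dsum Y) Z) :
    g.φ v = 0 :=
  LinearMap.prod_ext (M := X.V v) (M₂ := Y.V v)
    ((hX (g.comp (inl X Y))).trans (LinearMap.zero_comp _).symm)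
    ((hY (g.comp (inr X Y))).trans (LinearMap.zero_comp _).symm)

theorem Hom.φ_dsumList_eq_zero {Z : QRep K s t} {v : ι} (Xs : List (QRep K s t))
    (h : ∀ X ∈ Xs, ∀ g : Hom X Z, g.φ v = 0) (g : Hom (dsumList Xs) Z) : g.φ v = 0 := by
  induction Xs with
  | nil => exact Subsingleton.elim (α := PUnit →ₗ[K] Z.V v) _ _
  | cons X Xs ih =>
    exact Hom.φ_dsum_eq_zero (h X List.mem_cons_self)
      (ih fun Y hY => h Y (List.mem_cons_of_mem X hY)) g

end QRep

section Interval

variable {K : Type} [Field K] {n i j : ℕ}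

theorem Eij_V_subsingleton {p : Fin n} (h : ¬(i ≤ p.val ∧ p.val ≤ j)) :
    Subsingleton ((Eij K n i j).V p) := by
  change Subsingleton (ESub K n i j p)
  rw [ESub, if_neg h]
  infer_instance

theorem Eij_subtype_comp_f {e : Fin (n - 1)} (h₁ : i ≤ e.val + 1) (h₂ : e.val + 1 ≤ j) :
    (ESub K n i j (ATgt n e)).subtype ∘ₗ (Eij K n i j).f e =
      (ESub K n i j (ASrc n e)).subtype := by
  have htop : ESub K n i j (ATgt n e) = ⊤ := if_pos ⟨h₁, h₂⟩
  ext x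
  simp only [Eij, toSub, htop, ↓reduceDIte, LinearMap.comp_codRestrict, LinearMap.id_comp]
  rfl

theorem Eij_f_injective {e : Fin (n - 1)} (h₁ : i ≤ e.val + 1) (h₂ : e.val + 1 ≤ j) :
    Function.Injective ((Eij K n i j).f e) := by
  intro x y hxy
  apply (ESub K n i j (ASrc n e)).subtype_injective
  rw [← Eij_subtype_comp_f h₁ h₂]
  exact congrArg (ESub K n i j (ATgt n e)).subtype hxy

theorem Eij_f_surjective {e : Fin (n - 1)} (h₁ : i ≤ e.val) (h₂ : e.val + 1 ≤ j) :
    Function.Surjective ((Eij K n i j).f e) := fun y => by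
  have hsrc : ESub K n i j (ASrc n e) = ⊤ := if_pos (show i ≤ e.val ∧ e.val ≤ j by omega)
  refine ⟨⟨(ESub K n i j (ATgt n e)).subtype y, hsrc ▸ Submodule.mem_top⟩, Subtype.ext ?_⟩
  exact LinearMap.congr_fun (Eij_subtype_comp_f (by omega) h₂) _

variable {k l : ℕ} (g : QRep.Hom (Eij K n i j) (Eij K n k l))

theorem Eij_hom_φ_eq_zero_of_lt (hjl : j < l) (hl : l < n) {p : ℕ} (hkp : k ≤ p)
    (hpl : p ≤ l) : g.φ ⟨p, hpl.trans_lt hl⟩ = 0 := by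
  induction hpl using Nat.decreasingInduction with
  | self =>
    exact g.φ_eq_zero_of_subsingleton_left _
      (Eij_V_subsingleton (show ¬(i ≤ l ∧ l ≤ j) by omega))
  | of_succ p hpl ih =>
    let e : Fin (n - 1) := ⟨p, by omega⟩
    exact g.φ_source_eq_zero_of_injective (e := e)
      (Eij_f_injective (show k ≤ p + 1 by omega) (show p + 1 ≤ l by omega)) (ih (by omega))

theorem Eij_hom_φ_eq_zero_of_lt_of_le (hik : i < k) (hkj : k ≤ j) (hk : k < n) :
    g.φ ⟨k, hk⟩ = 0 := by
  obtain ⟨m, rfl⟩ : ∃ m, k = m + 1 := ⟨k - 1, by omega⟩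
  let e : Fin (n - 1) := ⟨m, by omega⟩
  exact g.φ_target_eq_zero_of_surjective (e := e)
    (Eij_f_surjective (show i ≤ m by omega) (show m + 1 ≤ j by omega))
    (g.φ_eq_zero_of_subsingleton_right _
      (Eij_V_subsingleton (show ¬(m + 1 ≤ m ∧ _) by omega)))

theorem Eij_hom_φ_left_eq_zero (hkl : k ≤ l) (hl : l < n) (h : ¬(i = k ∧ l ≤ j)) :
    g.φ ⟨k, hkl.trans_lt hl⟩ = 0 := by
  by_cases hik : i = k
  · exact Eij_hom_φ_eq_zero_of_lt g (by omega) hl le_rfl hkl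
  by_cases hkj : i < k ∧ k ≤ j
  · exact Eij_hom_φ_eq_zero_of_lt_of_le g hkj.1 hkj.2 _
  · exact g.φ_eq_zero_of_subsingleton_left _
      (Eij_V_subsingleton (show ¬(i ≤ k ∧ k ≤ j) by omega))

end Interval

theorem stmt8_general (K : Type) [Field K] (n k l : ℕ) (hkl : k ≤ l) (hl : l < n)
    (L : List (ℕ × ℕ))
    (f : QRep.Hom (intervalSum K n L) (Eij K n k l)) (hf : f.Surjective) :
    ∃ pr ∈ L, pr.1 = k ∧ l ≤ pr.2 := by
  by_contra! hL
  have hzero : f.φ ⟨k, hkl.trans_lt hl⟩ = 0 := by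
    refine QRep.Hom.φ_dsumList_eq_zero _ (fun X hX g => ?_) f
    obtain ⟨⟨i, j⟩, hij, rfl⟩ := List.mem_map.mp hX
    exact Eij_hom_φ_left_eq_zero g hkl hl fun ⟨hik, hlj⟩ => (hL _ hij hik).not_ge hlj
  have hone : (1 : K) ∈ ESub K n k l ⟨k, hkl.trans_lt hl⟩ := by
    rw [ESub, if_pos ⟨le_rfl, hkl⟩]
    exact Submodule.mem_top
  obtain ⟨x, hx⟩ := hf ⟨k, hkl.trans_lt hl⟩ ⟨1, hone⟩
  rw [hzero, LinearMap.zero_apply] at hx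
  exact zero_ne_one (congrArg Subtype.val hx)

/-- if a direct sum of interval representations surjects onto `E^{kl}`, then
one of the summands is `E^{kj}` with `j ≥ l`. -/
theorem stmt8 (K : Type) [Field K] (n k l : ℕ) (hkl : k ≤ l) (hl : l < n)
    (L : List (ℕ × ℕ)) (hL : ∀ pr ∈ L, pr.1 ≤ pr.2 ∧ pr.2 < n)
    (f : QRep.Hom (intervalSum K n L) (Eij K n k l)) (hf : f.Surjective) :
    ∃ pr ∈ L, pr.1 = k ∧ l ≤ pr.2 :=
  stmt8_general K n k l hkl hl L f hf
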